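/- For T = {6,2}: b(n) := n(n+4)(2n+1)²/(15(7n-4)) satisfies b(n) = (1372n³ + 7644n² + 10199n + 7200)/(2401·15) + 1920/(2401(7n-4)), and for every integer n ≥ 8817, b(n) is not an integer. -/

import Mathlib

noncomputable def bn62 (n : ℕ) : ℝ :=
  (n : ℝ) * ((n : ℝ) + 4) * (2 * (n : ℝ) + 1) ^ 2 / (15 * (7 * (n : ℝ) - 4))

/-! `36015 b(n)` is an integer polynomial in `n` plus `28800 / (7n - 4)`, and this remainder lies
strictly between `0` and `1` as soon as `7n - 4 > 28800`; so `36015 b(n)`, and hence `b(n)`, is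
not an integer. -/

lemma seven_mul_natCast_sub_four_ne_zero (n : ℕ) : 7 * (n : ℝ) - 4 ≠ 0 := by
  intro h
  have : 7 * n = 4 := by exact_mod_cast sub_eq_zero.mp h
  omega

lemma bn62_eq (n : ℕ) : bn62 n =
    (1372 * (n : ℝ) ^ 3 + 7644 * (n : ℝ) ^ 2 + 10199 * (n : ℝ) + 7200) / (2401 * 15)
      + 1920 / (2401 * (7 * (n : ℝ) - 4)) := by
  have h := seven_mul_natCast_sub_four_ne_zero n
  rw [bn62, div_add_div _ _ (by norm_num) (mul_ne_zero (by norm_num) h),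
    div_eq_div_iff (mul_ne_zero (by norm_num) h)
      (mul_ne_zero (by norm_num) (mul_ne_zero (by norm_num) h))]
  ring

lemma not_exists_intCast_eq_intCast_div_add {N : ℕ} (hN : 0 < N) (a : ℤ) {r : ℝ} (hr₀ : 0 < r)
    (hr₁ : r < 1 / N) : ¬∃ m : ℤ, (a : ℝ) / N + r = m := by
  rintro ⟨m, hm⟩
  have hNR : (0 : ℝ) < N := by exact_mod_cast hN
  have hz : ((N * m - a : ℤ) : ℝ) = N * r := by
    push_cast
    rw [← hm]
    field_simp
    ring
  have hz₀ : (0 : ℝ) < (N * m - a : ℤ) := hz ▸ mul_pos hNR hr₀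
  have hz₁ : ((N * m - a : ℤ) : ℝ) < 1 := by
    rw [hz]
    rwa [lt_div_iff₀ hNR, mul_comm] at hr₁
  have : (0 : ℤ) < N * m - a := by exact_mod_cast hz₀
  have : N * m - a < (1 : ℤ) := by exact_mod_cast hz₁
  omega

/-- The decomposition of `b_{n,{6,2}}` and its non-integrality for `n ≥ 8817`. -/
theorem bn62_props :
    (∀ n : ℕ, bn62 n =
        (1372 * (n : ℝ) ^ 3 + 7644 * (n : ℝ) ^ 2 + 10199 * (n : ℝ) + 7200) / (2401 * 15)
          + 1920 / (2401 * (7 * (n : ℝ) - 4)))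
      ∧ ∀ n : ℕ, 8817 ≤ n → ¬∃ m : ℤ, bn62 n = m := by
  refine ⟨bn62_eq, fun n hn => ?_⟩
  have hnR : (8817 : ℝ) ≤ n := by exact_mod_cast hn
  have hr₀ : (0 : ℝ) < 1920 / (2401 * (7 * (n : ℝ) - 4)) := by
    apply div_pos <;> linarith
  have hr₁ : 1920 / (2401 * (7 * (n : ℝ) - 4)) < 1 / ((2401 * 15 : ℕ) : ℝ) := by
    rw [div_lt_div_iff₀ (by linarith) (by norm_num)]
    push_cast
    linarith
  have key := not_exists_intCast_eq_intCast_div_add (by norm_num)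
    (1372 * (n : ℤ) ^ 3 + 7644 * (n : ℤ) ^ 2 + 10199 * n + 7200) hr₀ hr₁
  push_cast at key
  rw [bn62_eq]
  simpa only [show (2401 * 15 : ℝ) = 36015 by norm_num] using key
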